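/- arXiv:1603.06478 — 5 statements merged into one kernel-verified Lean document; each statement's English description precedes it below -/
import Mathlib

section
/- If C ⊂ ℝ^d is a finite set with at least two distinct points and minimum pairwise squared distance at least 4d/π, then the optimal spherical-Gaussian negative log-likelihood OPT(C,1) = min_{μ,σ²} [(|C|d/2)ln(2πσ²) + (1/(2σ²))∑_{x∈C}‖x−μ‖²] satisfies OPT(C,1) ≥ |C|·d/2. -/
open Finset Real

theorem opt_nll_lower_bound_of_separated
    {d : ℕ} (hd : 1 ≤ d) (C : Finset (EuclideanSpace ℝ (Fin d)))
    (hC : 2 ≤ C.card)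
    (hsep : ∀ x ∈ C, ∀ y ∈ C, x ≠ y → (4 * d) / π ≤ ‖x - y‖ ^ 2) :
    ∀ μ : EuclideanSpace ℝ (Fin d), ∀ σ2 : ℝ, 0 < σ2 →
      (C.card : ℝ) * d / 2 ≤
        ((C.card : ℝ) * d / 2) * Real.log (2 * π * σ2)
          + (1 / (2 * σ2)) * ∑ x ∈ C, ‖x - μ‖ ^ 2 := by
  classical
  intro μ σ2 hσ
  have hπ : (0:ℝ) < π := Real.pi_pos
  have hd' : (1:ℝ) ≤ (d:ℝ) := by exact_mod_cast hd
  have hn : (2:ℝ) ≤ (C.card : ℝ) := by exact_mod_cast hC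
  set A := C.filter (fun x => ‖x - μ‖ ^ 2 < (d:ℝ)/π) with hAdef
  have hAsub : A ⊆ C := Finset.filter_subset _ _
  have hcardA : A.card ≤ 1 := by
    by_contra h
    push_neg at h
    obtain ⟨x, hx, y, hy, hxy⟩ := Finset.one_lt_card.mp h
    rw [hAdef, Finset.mem_filter] at hx hy
    have hsxy := hsep x hx.1 y hy.1 hxy
    have htri : ‖x - y‖ ≤ ‖x - μ‖ + ‖y - μ‖ := by
      have := norm_sub_le_norm_sub_add_norm_sub x μ y
      calc ‖x - y‖ ≤ ‖x - μ‖ + ‖μ - y‖ := norm_sub_le_norm_sub_add_norm_sub x μ y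
        _ = ‖x - μ‖ + ‖y - μ‖ := by rw [norm_sub_rev μ y]
    have h1 := hx.2
    have h2 := hy.2
    have hnx : (0:ℝ) ≤ ‖x - μ‖ := norm_nonneg _
    have hny : (0:ℝ) ≤ ‖y - μ‖ := norm_nonneg _
    have hnxy : (0:ℝ) ≤ ‖x - y‖ := norm_nonneg _
    have hsq : ‖x - y‖ ^ 2 ≤ (‖x - μ‖ + ‖y - μ‖) ^ 2 := by
      nlinarith
    have h4 : (4 * (d:ℝ)) / π = 4 * ((d:ℝ)/π) := by ring
    nlinarith [sq_nonneg (‖x - μ‖ - ‖y - μ‖)]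
  -- lower bound on the sum
  have hterm : ∀ x ∈ C \ A, (d:ℝ)/π ≤ ‖x - μ‖ ^ 2 := by
    intro x hx
    rw [Finset.mem_sdiff, hAdef, Finset.mem_filter] at hx
    have := hx.2
    push_neg at this
    exact this hx.1
  have hcard_sdiff : (C.card - 1 : ℝ) ≤ ((C \ A).card : ℝ) := by
    rw [Finset.card_sdiff_of_subset hAsub]
    have h1 : C.card - 1 ≤ C.card - A.card := by omega
    have h2 : A.card ≤ C.card := Finset.card_le_card hAsub
    push_cast [Nat.cast_sub h2]
    have : (A.card : ℝ) ≤ 1 := by exact_mod_cast hcardA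
    linarith
  have hsum1 : ((C \ A).card : ℝ) * ((d:ℝ)/π) ≤ ∑ x ∈ C \ A, ‖x - μ‖ ^ 2 := by
    calc ((C \ A).card : ℝ) * ((d:ℝ)/π) = ∑ _x ∈ C \ A, (d:ℝ)/π := by
          rw [Finset.sum_const, nsmul_eq_mul]
      _ ≤ ∑ x ∈ C \ A, ‖x - μ‖ ^ 2 := Finset.sum_le_sum hterm
  have hsum2 : ∑ x ∈ C \ A, ‖x - μ‖ ^ 2 ≤ ∑ x ∈ C, ‖x - μ‖ ^ 2 :=
    Finset.sum_le_sum_of_subset_of_nonneg (Finset.sdiff_subset) (fun i _ _ => sq_nonneg _)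
  have hS : ((C.card : ℝ) - 1) * ((d:ℝ)/π) ≤ ∑ x ∈ C, ‖x - μ‖ ^ 2 := by
    have : ((C.card : ℝ) - 1) * ((d:ℝ)/π) ≤ ((C \ A).card : ℝ) * ((d:ℝ)/π) := by
      apply mul_le_mul_of_nonneg_right hcard_sdiff
      positivity
    linarith
  have hS' : (C.card : ℝ) * (d:ℝ) / (2 * π) ≤ ∑ x ∈ C, ‖x - μ‖ ^ 2 := by
    have : (C.card : ℝ) * (d:ℝ) / (2 * π) ≤ ((C.card : ℝ) - 1) * ((d:ℝ)/π) := by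
      rw [div_le_iff₀ (by positivity : (0:ℝ) < 2 * π)]
      have hdp : (d:ℝ)/π * π = (d:ℝ) := div_mul_cancel₀ _ (ne_of_gt hπ)
      nlinarith
    linarith
  -- log bound:  1 - 1/t ≤ log t
  set t := 2 * π * σ2 with ht
  have htpos : 0 < t := by positivity
  have hlog : 1 - 1/t ≤ Real.log t := by
    have h := Real.log_le_sub_one_of_pos (x := 1/t) (by positivity)
    rw [Real.log_div one_ne_zero (ne_of_gt htpos), Real.log_one] at h
    linarith
  set S := ∑ x ∈ C, ‖x - μ‖ ^ 2 with hSdef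
  have hSnonneg : 0 ≤ S := Finset.sum_nonneg (fun i _ => sq_nonneg _)
  have hnd : 0 ≤ (C.card : ℝ) * (d:ℝ) / 2 := by positivity
  have key : (C.card : ℝ) * (d:ℝ) / 2 * (1 - 1/t) + (1 / (2*σ2)) * S ≥ (C.card : ℝ) * (d:ℝ) / 2 := by
    have h1 : 1 / (2*σ2) = π / t := by
      rw [ht]; field_simp
    rw [h1]
    have hkey : (C.card : ℝ) * (d:ℝ) / 2 ≤ π * S := by
      have hmul := mul_le_mul_of_nonneg_left hS' hπ.le
      have heq : π * ((C.card : ℝ) * (d:ℝ) / (2 * π)) = (C.card : ℝ) * (d:ℝ) / 2 := by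
        field_simp
      linarith [heq ▸ hmul]
    have h2 : (C.card : ℝ) * (d:ℝ) / 2 * (1/t) ≤ (π / t) * S := by
      rw [mul_one_div, div_mul_eq_mul_div]
      exact (div_le_div_iff_of_pos_right htpos).mpr hkey
    nlinarith
  have hmono : (C.card : ℝ) * (d:ℝ) / 2 * (1 - 1/t) ≤ (C.card : ℝ) * (d:ℝ) / 2 * Real.log t :=
    mul_le_mul_of_nonneg_left hlog hnd
  calc (C.card : ℝ) * (d:ℝ) / 2
      ≤ (C.card : ℝ) * (d:ℝ) / 2 * (1 - 1/t) + (1 / (2*σ2)) * S := key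
    _ ≤ (C.card : ℝ) * (d:ℝ) / 2 * Real.log t + (1 / (2*σ2)) * S := by linarith
end

section
/- Let C ⊂ ℝ^d be finite with empirical mean μ and variance σ² = (1/(|C|d))∑_{x∈C}‖x−μ‖² > 0. Suppose μ̃ satisfies ∑_{x∈C}‖x−μ̃‖² ≤ (1+ε)∑_{x∈C}‖x−μ‖², and σ̃² ≥ σ² with ln(σ̃²) − ln(σ²) ≤ ((1+ε)²−1)·(2/(|C|d))·OPT(C,1), where OPT(C,1) = (|C|d/2)(ln(2πσ²)+1) ≥ (|C|d/2). Then (|C|d/2)ln(2πσ̃²) + (1/(2σ̃²))∑_{x∈C}‖x−μ̃‖² ≤ (1+ε)³·OPT(C,1). -/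
/-!
Write `n = |C| d`, so that `∑ ‖x - μ‖² = n σ²` and `OPT = (n/2) log (2πσ²) + n/2`.
Replacing `σ²` by `σ̃²` raises the log term by at most `((1+ε)²-1) OPT`, while the quadratic
term is at most `(1+ε) n σ² / (2σ̃²) ≤ (1+ε) n/2` because `σ̃² ≥ σ²`. The cost is therefore at
most `(1+ε)² OPT + ε n/2`, and `n/2 ≤ OPT` absorbs the last summand into `(1+ε)³ OPT`.
-/

open Finset Real

lemma mul_log_two_pi_mul_le_of_log_sub_le {n s t δ : ℝ} (hn : 0 ≤ n) (hs : 0 < s) (ht : 0 < t)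
    (h : log t - log s ≤ δ) :
    n * log (2 * π * t) ≤ n * log (2 * π * s) + n * δ := by
  rw [← mul_add]
  refine mul_le_mul_of_nonneg_left ?_ hn
  rw [log_mul (by positivity) ht.ne', log_mul (by positivity) hs.ne']
  linarith

lemma one_div_two_mul_mul_le_half {S c s t : ℝ} (hc : 0 ≤ c) (hs : 0 < s) (hst : s ≤ t)
    (hS : S ≤ c * s) :
    1 / (2 * t) * S ≤ c / 2 := by
  have ht : 0 < t := hs.trans_le hst
  rw [div_mul_eq_mul_div, one_mul, div_le_div_iff₀ (by positivity) two_pos]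
  nlinarith [mul_le_mul_of_nonneg_left hst hc]

lemma one_add_sq_mul_add_mul_le_one_add_pow_three_mul {ε a b : ℝ} (hε : 0 ≤ ε) (ha : 0 ≤ a)
    (hab : a ≤ b) :
    (1 + ε) ^ 2 * b + ε * a ≤ (1 + ε) ^ 3 * b := by
  have hab' : a ≤ (1 + ε) ^ 2 * b :=
    hab.trans (le_mul_of_one_le_left (ha.trans hab) (one_le_pow₀ (by linarith)))
  nlinarith [mul_le_mul_of_nonneg_left hab' hε]

theorem approx_params_single_cluster_cost_bound_general
    {d : ℕ} (C : Finset (EuclideanSpace ℝ (Fin d)))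
    (μ : EuclideanSpace ℝ (Fin d))
    (σ2 : ℝ) (hσ2 : σ2 = (1 / ((C.card : ℝ) * d)) * ∑ x ∈ C, ‖x - μ‖ ^ 2)
    (hσ2pos : 0 < σ2)
    (OPT : ℝ) (hOPT : OPT = ((C.card : ℝ) * d / 2) * (Real.log (2 * π * σ2) + 1))
    (hOPTlb : (C.card : ℝ) * d / 2 ≤ OPT)
    (ε : ℝ) (hε : 0 ≤ ε)
    (μt : EuclideanSpace ℝ (Fin d))
    (hμt : ∑ x ∈ C, ‖x - μt‖ ^ 2 ≤ (1 + ε) * ∑ x ∈ C, ‖x - μ‖ ^ 2)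
    (σt2 : ℝ) (hσt2 : σ2 ≤ σt2)
    (hσt2log : Real.log σt2 - Real.log σ2
        ≤ ((1 + ε) ^ 2 - 1) * (2 / ((C.card : ℝ) * d)) * OPT) :
    ((C.card : ℝ) * d / 2) * Real.log (2 * π * σt2)
        + (1 / (2 * σt2)) * ∑ x ∈ C, ‖x - μt‖ ^ 2
      ≤ (1 + ε) ^ 3 * OPT := by
  set n : ℝ := (C.card : ℝ) * d
  have hn : 0 < n := by
    rw [hσ2] at hσ2pos
    exact one_div_pos.mp (pos_of_mul_pos_left hσ2pos (by positivity))
  have hS : ∑ x ∈ C, ‖x - μ‖ ^ 2 = n * σ2 := by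
    rw [hσ2]; field_simp
  have hlog := mul_log_two_pi_mul_le_of_log_sub_le (n := n / 2) (half_pos hn).le hσ2pos
    (hσ2pos.trans_le hσt2) hσt2log
  have hquad := one_div_two_mul_mul_le_half (c := (1 + ε) * n)
    (mul_nonneg (by linarith) hn.le) hσ2pos hσt2
    (hμt.trans_eq (by rw [hS]; ring))
  have hOPT_log : n / 2 * log (2 * π * σ2) = OPT - n / 2 := by rw [hOPT]; ring
  have hOPT_excess : n / 2 * (((1 + ε) ^ 2 - 1) * (2 / n) * OPT) = ((1 + ε) ^ 2 - 1) * OPT := by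
    field_simp
  linarith [one_add_sq_mul_add_mul_le_one_add_pow_three_mul hε (half_pos hn).le hOPTlb]

theorem approx_params_single_cluster_cost_bound
    {d : ℕ} (hd : 1 ≤ d) (C : Finset (EuclideanSpace ℝ (Fin d)))
    (μ : EuclideanSpace ℝ (Fin d)) (hμ : μ = (C.card : ℝ)⁻¹ • ∑ x ∈ C, x)
    (σ2 : ℝ) (hσ2 : σ2 = (1 / ((C.card : ℝ) * d)) * ∑ x ∈ C, ‖x - μ‖ ^ 2)
    (hσ2pos : 0 < σ2)
    (OPT : ℝ) (hOPT : OPT = ((C.card : ℝ) * d / 2) * (Real.log (2 * π * σ2) + 1))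
    (hOPTlb : (C.card : ℝ) * d / 2 ≤ OPT)
    (ε : ℝ) (hε : 0 ≤ ε)
    (μt : EuclideanSpace ℝ (Fin d))
    (hμt : ∑ x ∈ C, ‖x - μt‖ ^ 2 ≤ (1 + ε) * ∑ x ∈ C, ‖x - μ‖ ^ 2)
    (σt2 : ℝ) (hσt2 : σ2 ≤ σt2)
    (hσt2log : Real.log σt2 - Real.log σ2
        ≤ ((1 + ε) ^ 2 - 1) * (2 / ((C.card : ℝ) * d)) * OPT) :
    ((C.card : ℝ) * d / 2) * Real.log (2 * π * σt2)
        + (1 / (2 * σt2)) * ∑ x ∈ C, ‖x - μt‖ ^ 2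
      ≤ (1 + ε) ^ 3 * OPT :=
  approx_params_single_cluster_cost_bound_general C μ σ2 hσ2 hσ2pos OPT hOPT hOPTlb ε hε μt hμt σt2
    hσt2 hσt2log
end

section
/- Suppose for every k, |C_k| ≤ n_k ≤ (1+ε)|C_k|, ‖μ̃_k − μ(C_k)‖² ≤ (ε/|C_k|)∑_{x∈C_k}‖x−μ(C_k)‖², σ̃_k² ≥ σ_k², and ln(σ̃_k²) − ln(σ_k²) ≤ ((1+ε)²−1)·(2/(|C_k|d))·OPT(C_k,1), where σ_k² is the empirical variance of C_k and OPT(C_k,1) ≥ |C_k|d/2. Set w̃_k = n_k/∑_l n_l. Then the complete-data negative log-likelihood of the partition {C_k} with parameters {(w̃_k, μ̃_k, σ̃_k²)} is at most (1+ε)⁴ times the optimal complete-data negative log-likelihood ∑_k [OPT(C_k,1) − ln(|C_k|/|X|)|C_k|]. -/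
/-!
Split the cost of each cluster into its variance, distortion and weight terms. The hypothesis
on `ln σ̃²` costs a factor `(1+ε)²` on the variance term; by the parallel axis theorem the
distortion around `μ̃` is at most `(1+ε)` times the one around the centroid, and `σ̃² ≥ σ²`
then bounds the distortion term by `(1+ε)·|C|d/2 ≤ OPT + ε·OPT`. For the weight term only the
other clusters are inflated, so `∑ n / n_k ≤ 1 + (1+ε)(t - 1)` with `t = N/|C_k|`, and
Bernoulli's inequality `1 + (1+ε)(t-1) ≤ t^(1+ε)` gives `-ln w̃_k ≤ (1+ε)·(-ln(|C_k|/N))`.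
-/

open Finset Real

section ParallelAxis

variable {ι E : Type*} [NormedAddCommGroup E] [InnerProductSpace ℝ E]

theorem sum_norm_sub_sq_eq_add_card_mul (s : Finset ι) (x : ι → E) (b : E) :
    ∑ i ∈ s, ‖x i - b‖ ^ 2 = ∑ i ∈ s, ‖x i - (#s : ℝ)⁻¹ • ∑ j ∈ s, x j‖ ^ 2
      + #s * ‖b - (#s : ℝ)⁻¹ • ∑ j ∈ s, x j‖ ^ 2 := by
  set c := (#s : ℝ)⁻¹ • ∑ j ∈ s, x j
  have hdev : ∑ i ∈ s, (x i - c) = 0 := by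
    rcases s.eq_empty_or_nonempty with rfl | hs
    · simp
    rw [sum_sub_distrib, sum_const, ← Nat.cast_smul_eq_nsmul ℝ, smul_smul,
      mul_inv_cancel₀ (by exact_mod_cast hs.card_pos.ne'), one_smul, sub_self]
  have hsplit : ∀ i ∈ s,
      ‖x i - b‖ ^ 2 = ‖x i - c‖ ^ 2 - 2 * inner ℝ (x i - c) (b - c) + ‖b - c‖ ^ 2 := by
    intro i _
    rw [← norm_sub_sq_real, sub_sub_sub_cancel_right]
  rw [sum_congr rfl hsplit, sum_add_distrib, sum_sub_distrib, sum_const, ← mul_sum, ← sum_inner,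
    hdev, inner_zero_left, mul_zero, sub_zero, nsmul_eq_mul]

theorem sum_norm_sub_sq_le_of_norm_sub_centroid_sq_le (s : Finset ι) (x : ι → E) {b : E} {ε : ℝ}
    (hb : ‖b - (#s : ℝ)⁻¹ • ∑ j ∈ s, x j‖ ^ 2
      ≤ ε / #s * ∑ i ∈ s, ‖x i - (#s : ℝ)⁻¹ • ∑ j ∈ s, x j‖ ^ 2) :
    ∑ i ∈ s, ‖x i - b‖ ^ 2 ≤ (1 + ε) * ∑ i ∈ s, ‖x i - (#s : ℝ)⁻¹ • ∑ j ∈ s, x j‖ ^ 2 := by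
  rcases s.eq_empty_or_nonempty with rfl | hs
  · simp
  have hcard : (0 : ℝ) < #s := by exact_mod_cast hs.card_pos
  rw [sum_norm_sub_sq_eq_add_card_mul s x b]
  calc _ ≤ _ + #s * (ε / #s * _) := by gcongr
    _ = _ := by field_simp

end ParallelAxis

theorem log_one_add_mul_sub_one_le {t c : ℝ} (ht : 1 ≤ t) (hc : 1 ≤ c) :
    log (1 + c * (t - 1)) ≤ c * log t := by
  have hbernoulli := one_add_mul_self_le_rpow_one_add (s := t - 1) (by linarith) hc
  rw [add_sub_cancel] at hbernoulli
  calc log (1 + c * (t - 1)) ≤ log (t ^ c) := log_le_log (by nlinarith) hbernoulli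
    _ = c * log t := log_rpow (by linarith) c

theorem neg_log_div_sum_le {ι : Type*} [Fintype ι] {m n : ι → ℝ} {ε : ℝ} (hε : 0 ≤ ε)
    (hm : ∀ l, 0 ≤ m l) (hn : ∀ l, m l ≤ n l ∧ n l ≤ (1 + ε) * m l) {k : ι} (hmk : 0 < m k) :
    -log (n k / ∑ l, n l) ≤ (1 + ε) * -log (m k / ∑ l, m l) := by
  classical
  set R := ∑ l ∈ univ.erase k, n l
  set M := ∑ l ∈ univ.erase k, m l
  have hnk : 0 < n k := hmk.trans_le (hn k).1
  have hR : 0 ≤ R := sum_nonneg fun l _ => (hm l).trans (hn l).1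
  have hM : 0 ≤ M := sum_nonneg fun l _ => hm l
  have hRM : R ≤ (1 + ε) * M := by rw [mul_sum]; exact sum_le_sum fun l _ => (hn l).2
  have hratio : (n k + R) / n k ≤ 1 + (1 + ε) * ((m k + M) / m k - 1) := by
    rw [add_div, div_self hnk.ne', add_div, div_self hmk.ne', add_sub_cancel_left]
    gcongr 1 + ?_
    calc R / n k ≤ (1 + ε) * M / n k := by gcongr
      _ ≤ (1 + ε) * M / m k := by gcongr; exact (hn k).1
      _ = _ := mul_div_assoc _ _ _
  have ht : 1 ≤ (m k + M) / m k := by rw [le_div_iff₀ hmk]; linarith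
  rw [← add_sum_erase _ n (mem_univ k), ← add_sum_erase _ m (mem_univ k),
    ← log_inv, inv_div, ← log_inv, inv_div]
  calc log ((n k + R) / n k) ≤ log (1 + (1 + ε) * ((m k + M) / m k - 1)) :=
        log_le_log (by positivity) hratio
    _ ≤ _ := log_one_add_mul_sub_one_le ht (by linarith)

section ClusterCost

variable {m d σ2 σt2 OPT : ℝ}

theorem log_variance_term_le {c : ℝ} (hmd : 0 < m * d) (hσ2pos : 0 < σ2) (hσt2 : σ2 ≤ σt2)
    (hOPT : OPT = m * d / 2 * (log (2 * π * σ2) + 1))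
    (hlog : log σt2 - log σ2 ≤ c * (2 / (m * d)) * OPT) :
    m * d / 2 * log (2 * π * σt2) ≤ OPT - m * d / 2 + c * OPT := by
  have hscaled : m * d / 2 * (log σt2 - log σ2) ≤ c * OPT :=
    calc _ ≤ m * d / 2 * (c * (2 / (m * d)) * OPT) := by gcongr
      _ = c * OPT := by
        have := left_ne_zero_of_mul hmd.ne'
        have := right_ne_zero_of_mul hmd.ne'
        field_simp
  have hπ : 2 * π ≠ 0 := by positivity
  rw [hOPT, log_mul hπ (hσ2pos.trans_le hσt2).ne'] at *
  rw [log_mul hπ hσ2pos.ne'] at hscaled ⊢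
  linarith

theorem distortion_term_le {S St ε : ℝ} (hε : 0 ≤ ε) (hmd : 0 < m * d) (hσ2pos : 0 < σ2)
    (hσt2 : σ2 ≤ σt2) (hσ2 : σ2 = 1 / (m * d) * S) (hSt : St ≤ (1 + ε) * S) :
    1 / (2 * σt2) * St ≤ (1 + ε) * (m * d / 2) := by
  have hS : S = σ2 * (m * d) := by
    rw [hσ2, mul_comm, ← mul_assoc, mul_one_div_cancel hmd.ne', one_mul]
  have hσt2pos : 0 < σt2 := hσ2pos.trans_le hσt2
  have hεS : 0 ≤ (1 + ε) * S := by rw [hS]; positivity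
  calc 1 / (2 * σt2) * St ≤ 1 / (2 * σt2) * ((1 + ε) * S) := by gcongr
    _ ≤ 1 / (2 * σ2) * ((1 + ε) * S) := by gcongr
    _ = (1 + ε) * (m * d / 2) := by rw [hS]; field_simp

theorem cluster_cost_le {S St ε w v : ℝ} (hε : 0 ≤ ε) (hm : 0 ≤ m) (hmd : 0 < m * d)
    (hσ2pos : 0 < σ2) (hσt2 : σ2 ≤ σt2) (hσ2 : σ2 = 1 / (m * d) * S)
    (hOPT : OPT = m * d / 2 * (log (2 * π * σ2) + 1)) (hOPTlb : m * d / 2 ≤ OPT)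
    (hlog : log σt2 - log σ2 ≤ ((1 + ε) ^ 2 - 1) * (2 / (m * d)) * OPT)
    (hSt : St ≤ (1 + ε) * S) (hw : -log w ≤ (1 + ε) * -log v) (hv : log v ≤ 0) :
    m * d / 2 * log (2 * π * σt2) + 1 / (2 * σt2) * St - m * log w
      ≤ (1 + ε) ^ 4 * (OPT - log v * m) := by
  have hvariance := log_variance_term_le hmd hσ2pos hσt2 hOPT hlog
  have hdistortion := distortion_term_le hε hmd hσ2pos hσt2 hσ2 hSt
  have hweight : -(m * log w) ≤ (1 + ε) * (-log v * m) := by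
    linarith [mul_le_mul_of_nonneg_left hw hm]
  have hOPTpos : 0 ≤ OPT := le_trans (by positivity) hOPTlb
  have hεOPT : ε * (m * d / 2) ≤ ε * OPT := by gcongr
  have hOPTcoeff : ((1 + ε) ^ 2 + ε) * OPT ≤ (1 + ε) ^ 4 * OPT := by
    gcongr; nlinarith [pow_nonneg hε 3, pow_nonneg hε 4]
  have hweightcoeff : (1 + ε) * (-log v * m) ≤ (1 + ε) ^ 4 * (-log v * m) := by
    gcongr
    · exact mul_nonneg (by linarith) hm
    · exact le_self_pow₀ (by linarith) (by norm_num)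
  linarith

end ClusterCost

theorem approx_params_cmle_cost_bound_general
    {d K : ℕ} (hd : 1 ≤ d)
    (C : Fin K → Finset (EuclideanSpace ℝ (Fin d)))
    (hCne : ∀ k, (C k).Nonempty)
    (N : ℕ) (hN : N = ∑ k, (C k).card)
    (μ : Fin K → EuclideanSpace ℝ (Fin d))
    (hμ : ∀ k, μ k = (((C k).card : ℝ))⁻¹ • ∑ x ∈ C k, x)
    (σ2 : Fin K → ℝ)
    (hσ2 : ∀ k, σ2 k = (1 / (((C k).card : ℝ) * d)) * ∑ x ∈ C k, ‖x - μ k‖ ^ 2)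
    (hσ2pos : ∀ k, 0 < σ2 k)
    (OPT : Fin K → ℝ)
    (hOPT : ∀ k, OPT k = (((C k).card : ℝ) * d / 2) * (Real.log (2 * π * σ2 k) + 1))
    (hOPTlb : ∀ k, ((C k).card : ℝ) * d / 2 ≤ OPT k)
    (ε : ℝ) (hε0 : 0 ≤ ε)
    (n : Fin K → ℝ)
    (hn : ∀ k, ((C k).card : ℝ) ≤ n k ∧ n k ≤ (1 + ε) * ((C k).card : ℝ))
    (w : Fin K → ℝ) (hw : ∀ k, w k = n k / ∑ l, n l)
    (μt : Fin K → EuclideanSpace ℝ (Fin d))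
    (hμt : ∀ k, ‖μt k - μ k‖ ^ 2
        ≤ (ε / ((C k).card : ℝ)) * ∑ x ∈ C k, ‖x - μ k‖ ^ 2)
    (σt2 : Fin K → ℝ) (hσt2 : ∀ k, σ2 k ≤ σt2 k)
    (hσt2log : ∀ k, Real.log (σt2 k) - Real.log (σ2 k)
        ≤ ((1 + ε) ^ 2 - 1) * (2 / (((C k).card : ℝ) * d)) * OPT k) :
    ∑ k, ((((C k).card : ℝ) * d / 2) * Real.log (2 * π * σt2 k)
            + (1 / (2 * σt2 k)) * ∑ x ∈ C k, ‖x - μt k‖ ^ 2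
            - ((C k).card : ℝ) * Real.log (w k))
      ≤ (1 + ε) ^ 4 *
          ∑ k, (OPT k - Real.log (((C k).card : ℝ) / (N : ℝ)) * ((C k).card : ℝ)) := by
  have hcard : ∀ k, (0 : ℝ) < (C k).card := fun k => by exact_mod_cast (hCne k).card_pos
  have hNsum : (N : ℝ) = ∑ k, ((C k).card : ℝ) := by rw [hN]; push_cast; rfl
  rw [mul_sum]
  refine sum_le_sum fun k _ => ?_
  have hdistortion : ∑ x ∈ C k, ‖x - μt k‖ ^ 2 ≤ (1 + ε) * ∑ x ∈ C k, ‖x - μ k‖ ^ 2 := by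
    have := sum_norm_sub_sq_le_of_norm_sub_centroid_sq_le (C k) id (b := μt k) (ε := ε)
    simp only [id, ← hμ k] at this
    exact this (hμt k)
  have hweight := neg_log_div_sum_le hε0 (fun l => (hcard l).le) hn (hcard k)
  have hlog_frac_nonpos : log ((C k).card / N) ≤ 0 := by
    have hle : ((C k).card : ℝ) ≤ N :=
      hNsum ▸ single_le_sum (fun l _ => (hcard l).le) (mem_univ k)
    exact log_nonpos (div_nonneg (hcard k).le (by positivity))
      (div_le_one_of_le₀ hle (by positivity))
  rw [← hNsum] at hweight
  rw [hw k]
  exact cluster_cost_le hε0 (hcard k).le (mul_pos (hcard k) (by exact_mod_cast hd)) (hσ2pos k)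
    (hσt2 k) (hσ2 k) (hOPT k) (hOPTlb k) (hσt2log k) hdistortion hweight hlog_frac_nonpos

/-- Theorem 3.1 of the paper: approximate weights, means and variances give a
complete-data negative log-likelihood within a `(1+ε)⁴` factor of the optimum. -/
theorem approx_params_cmle_cost_bound
    {d K : ℕ} (hd : 1 ≤ d)
    (C : Fin K → Finset (EuclideanSpace ℝ (Fin d)))
    (hCne : ∀ k, (C k).Nonempty)
    (N : ℕ) (hN : N = ∑ k, (C k).card)
    (μ : Fin K → EuclideanSpace ℝ (Fin d))
    (hμ : ∀ k, μ k = (((C k).card : ℝ))⁻¹ • ∑ x ∈ C k, x)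
    (σ2 : Fin K → ℝ)
    (hσ2 : ∀ k, σ2 k = (1 / (((C k).card : ℝ) * d)) * ∑ x ∈ C k, ‖x - μ k‖ ^ 2)
    (hσ2pos : ∀ k, 0 < σ2 k)
    (OPT : Fin K → ℝ)
    (hOPT : ∀ k, OPT k = (((C k).card : ℝ) * d / 2) * (Real.log (2 * π * σ2 k) + 1))
    (hOPTlb : ∀ k, ((C k).card : ℝ) * d / 2 ≤ OPT k)
    (ε : ℝ) (hε0 : 0 ≤ ε) (hε1 : ε ≤ 1)
    (n : Fin K → ℝ)
    (hn : ∀ k, ((C k).card : ℝ) ≤ n k ∧ n k ≤ (1 + ε) * ((C k).card : ℝ))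
    (w : Fin K → ℝ) (hw : ∀ k, w k = n k / ∑ l, n l)
    (μt : Fin K → EuclideanSpace ℝ (Fin d))
    (hμt : ∀ k, ‖μt k - μ k‖ ^ 2
        ≤ (ε / ((C k).card : ℝ)) * ∑ x ∈ C k, ‖x - μ k‖ ^ 2)
    (σt2 : Fin K → ℝ) (hσt2 : ∀ k, σ2 k ≤ σt2 k)
    (hσt2log : ∀ k, Real.log (σt2 k) - Real.log (σ2 k)
        ≤ ((1 + ε) ^ 2 - 1) * (2 / (((C k).card : ℝ) * d)) * OPT k) :
    ∑ k, ((((C k).card : ℝ) * d / 2) * Real.log (2 * π * σt2 k)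
            + (1 / (2 * σt2 k)) * ∑ x ∈ C k, ‖x - μt k‖ ^ 2
            - ((C k).card : ℝ) * Real.log (w k))
      ≤ (1 + ε) ^ 4 *
          ∑ k, (OPT k - Real.log (((C k).card : ℝ) / (N : ℝ)) * ((C k).card : ℝ)) :=
  approx_params_cmle_cost_bound_general hd C hCne N hN μ hμ σ2 hσ2 hσ2pos OPT hOPT hOPTlb ε hε0 n hn
    w hw μt hμt σt2 hσt2 hσt2log
end

section
/- Let X ⊂ ℝ^d be partitioned into K nonempty clusters C_1,…,C_K, each C_k assigned a center p_k such that ‖x−p_k‖ ≤ s for all x ∈ C_k. Then with weights w_k = 1/K, means p_k, and variances σ_k² = (1/(|C_k|d))∑_{x∈C_k}‖x−p_k‖² (assumed positive), the complete-data negative log-likelihood is at most (|X|d/2)·(ln(2πs²) + 1 + ln K). -/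
/-!
In each cluster the variance is at most `s² / d ≤ s²`, so the log-variance term is at most
`(|C_k| d / 2) ln(2π s²)`; the quadratic term is exactly `|C_k| d / 2` because `σ_k²` is the
normalized sum of squares; and the weight term `|C_k| ln K` is at most `(|C_k| d / 2) ln K`
because `d ≥ 2`. Summing the cluster bounds over `k` gives the claim.
-/

open Finset Real

theorem sum_sq_norm_sub_le_card_mul {E : Type*} [SeminormedAddCommGroup E] {S : Finset E}
    {p : E} {s : ℝ} (h : ∀ x ∈ S, ‖x - p‖ ≤ s) :
    ∑ x ∈ S, ‖x - p‖ ^ 2 ≤ S.card * s ^ 2 := by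
  simpa using Finset.sum_le_card_nsmul S _ (s ^ 2) fun x hx =>
    pow_le_pow_left₀ (norm_nonneg _) (h x hx) 2

section ClusterCost

variable {n d S σ2 s K : ℝ}

theorem normalized_sum_le_sq (hn : 0 < n) (hd : 1 ≤ d) (hS : S ≤ n * s ^ 2) :
    1 / (n * d) * S ≤ s ^ 2 := by
  rw [one_div_mul_eq_div, div_le_iff₀ (by positivity)]
  linarith [mul_le_mul_of_nonneg_left hd (by positivity : 0 ≤ n * s ^ 2)]

theorem one_div_two_mul_mul_eq_of_eq_one_div_mul (hσ : σ2 = 1 / (n * d) * S) (hσ0 : σ2 ≠ 0) :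
    1 / (2 * σ2) * S = n * d / 2 := by
  have hnd : n * d ≠ 0 := by
    rintro hnd
    simp [hσ, hnd] at hσ0
  have hS : S = σ2 * (n * d) := by
    rw [hσ, one_div_mul_eq_div, div_mul_cancel₀ _ hnd]
  rw [hS]
  field_simp

theorem neg_mul_log_one_div_le (hn : 0 ≤ n) (hd : 2 ≤ d) (hK : 1 ≤ K) :
    -(n * log (1 / K)) ≤ n * d / 2 * log K := by
  rw [one_div, log_inv, mul_neg, neg_neg]
  exact mul_le_mul_of_nonneg_right (by nlinarith) (log_nonneg hK)

theorem cluster_cost_le_s11 (hn : 0 < n) (hd : 2 ≤ d) (hK : 1 ≤ K)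
    (hσ : σ2 = 1 / (n * d) * S) (hσpos : 0 < σ2) (hS : S ≤ n * s ^ 2) :
    n * d / 2 * log (2 * π * σ2) + 1 / (2 * σ2) * S - n * log (1 / K)
      ≤ n * d / 2 * (log (2 * π * s ^ 2) + 1 + log K) := by
  have hσle : σ2 ≤ s ^ 2 := hσ ▸ normalized_sum_le_sq hn (by linarith) hS
  have hlog : log (2 * π * σ2) ≤ log (2 * π * s ^ 2) :=
    log_le_log (by positivity) (by gcongr)
  have hweight := neg_mul_log_one_div_le hn.le hd hK
  rw [one_div_two_mul_mul_eq_of_eq_one_div_mul hσ hσpos.ne']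
  linarith [mul_le_mul_of_nonneg_left hlog (by positivity : 0 ≤ n * d / 2)]

end ClusterCost

theorem cmle_cost_upper_bound_from_centers_general
    {d K : ℕ} (hd : 2 ≤ d) (hK : 1 ≤ K)
    (C : Fin K → Finset (EuclideanSpace ℝ (Fin d)))
    (hCne : ∀ k, (C k).Nonempty)
    (N : ℕ) (hN : N = ∑ k, (C k).card)
    (p : Fin K → EuclideanSpace ℝ (Fin d))
    (s : ℝ)
    (hdist : ∀ k, ∀ x ∈ C k, ‖x - p k‖ ≤ s)
    (σ2 : Fin K → ℝ)
    (hσ2 : ∀ k, σ2 k = (1 / (((C k).card : ℝ) * d)) * ∑ x ∈ C k, ‖x - p k‖ ^ 2)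
    (hσ2pos : ∀ k, 0 < σ2 k) :
    ∑ k, ((((C k).card : ℝ) * d / 2) * Real.log (2 * π * σ2 k)
            + (1 / (2 * σ2 k)) * ∑ x ∈ C k, ‖x - p k‖ ^ 2
            - ((C k).card : ℝ) * Real.log ((1 : ℝ) / K))
      ≤ ((N : ℝ) * d / 2) * (Real.log (2 * π * s ^ 2) + 1 + Real.log K) := by
  calc _ ≤ ∑ k, ((C k).card : ℝ) * d / 2 * (log (2 * π * s ^ 2) + 1 + log K) := by
        refine sum_le_sum fun k _ => cluster_cost_le_s11 ?_ (mod_cast hd) (mod_cast hK) (hσ2 k)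
          (hσ2pos k) (sum_sq_norm_sub_le_card_mul (hdist k))
        exact_mod_cast (hCne k).card_pos
    _ = _ := by
        rw [hN]
        push_cast
        rw [sum_mul, sum_div, sum_mul]

/-- Upper bound on the optimal complete-data negative log-likelihood obtained
from any clustering with centers at distance at most `s` from their points. -/
theorem cmle_cost_upper_bound_from_centers
    {d K : ℕ} (hd : 2 ≤ d) (hK : 1 ≤ K)
    (C : Fin K → Finset (EuclideanSpace ℝ (Fin d)))
    (hCne : ∀ k, (C k).Nonempty)
    (N : ℕ) (hN : N = ∑ k, (C k).card)
    (p : Fin K → EuclideanSpace ℝ (Fin d))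
    (s : ℝ) (hs : 0 < s)
    (hdist : ∀ k, ∀ x ∈ C k, ‖x - p k‖ ≤ s)
    (σ2 : Fin K → ℝ)
    (hσ2 : ∀ k, σ2 k = (1 / (((C k).card : ℝ) * d)) * ∑ x ∈ C k, ‖x - p k‖ ^ 2)
    (hσ2pos : ∀ k, 0 < σ2 k) :
    ∑ k, ((((C k).card : ℝ) * d / 2) * Real.log (2 * π * σ2 k)
            + (1 / (2 * σ2 k)) * ∑ x ∈ C k, ‖x - p k‖ ^ 2
            - ((C k).card : ℝ) * Real.log ((1 : ℝ) / K))
      ≤ ((N : ℝ) * d / 2) * (Real.log (2 * π * s ^ 2) + 1 + Real.log K) :=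
  cmle_cost_upper_bound_from_centers_general hd hK C hCne N hN p s hdist σ2 hσ2 hσ2pos
end

section
/- Let C ⊂ ℝ^d be a finite cluster with centroid μ, empirical variance σ² = cost(C,μ)/(|C|d) > 0, and let R ⊆ ℝ^d with C∩R ⊆ C. Suppose μ̃ and σ̃² satisfy cost(C∩R, μ̃) ≤ (1+ε)·cost(C, μ), σ̃² ≥ σ², ln(2πσ̃²) ≤ (1+ε)ln(2πσ²) with 2πσ² ≥ 1, and w̃ ≥ w = |C|/|X| with w ≤ 1. Then L_{C∩R}(w̃, μ̃, σ̃²) ≤ (1+2ε)·L_C(w, μ, σ²), where L_S(w,μ,σ²) = (|S|d/2)ln(2πσ²) + (1/(2σ²))cost(S,μ) − |S|ln(w) and cost(S,μ) = ∑_{x∈S}‖x−μ‖². -/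
set_option maxHeartbeats 1000000


open Finset Real
open scoped Classical

/-- k-means cost of a finite point set wrt. a center. -/
noncomputable def kcost {d : ℕ} (S : Finset (EuclideanSpace ℝ (Fin d)))
    (μ : EuclideanSpace ℝ (Fin d)) : ℝ :=
  ∑ x ∈ S, ‖x - μ‖ ^ 2

/-- Negative complete-data log-likelihood of a cluster wrt. a weighted
spherical Gaussian component. -/
noncomputable def wnll {d : ℕ} (S : Finset (EuclideanSpace ℝ (Fin d)))
    (w : ℝ) (μ : EuclideanSpace ℝ (Fin d)) (σ2 : ℝ) : ℝ :=
  ((S.card : ℝ) * d / 2) * Real.log (2 * π * σ2)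
    + (1 / (2 * σ2)) * kcost S μ - (S.card : ℝ) * Real.log w

theorem cost_of_correctly_assigned_points
    {d : ℕ} (hd : 1 ≤ d)
    (X C R : Finset (EuclideanSpace ℝ (Fin d))) (hCX : C ⊆ X) (hX : X.Nonempty)
    (μ : EuclideanSpace ℝ (Fin d)) (hμ : μ = (C.card : ℝ)⁻¹ • ∑ x ∈ C, x)
    (σ2 : ℝ) (hσ2 : σ2 = kcost C μ / ((C.card : ℝ) * d)) (hσ2pos : 0 < σ2)
    (hσ2norm : 1 ≤ 2 * π * σ2)
    (w : ℝ) (hw : w = (C.card : ℝ) / (X.card : ℝ)) (hw1 : w ≤ 1) (hwpos : 0 < w)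
    (ε : ℝ) (hε : 0 ≤ ε)
    (μt : EuclideanSpace ℝ (Fin d))
    (hcost : kcost (C ∩ R) μt ≤ (1 + ε) * kcost C μ)
    (σt2 : ℝ) (hσt2 : σ2 ≤ σt2)
    (hσt2log : Real.log (2 * π * σt2) ≤ (1 + ε) * Real.log (2 * π * σ2))
    (wt : ℝ) (hwt0 : 0 < wt) (hwt1 : wt ≤ 1) (hwle : w ≤ wt) :
    wnll (C ∩ R) wt μt σt2 ≤ (1 + 2 * ε) * wnll C w μ σ2 := by
  have hL1 : 0 ≤ Real.log (2 * π * σ2) := Real.log_nonneg hσ2norm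
  have hL12 : Real.log (2 * π * σ2) ≤ Real.log (2 * π * σt2) := by
    apply Real.log_le_log (by positivity)
    nlinarith [Real.pi_pos]
  have hL2 : 0 ≤ Real.log (2 * π * σt2) := hL1.trans hL12
  have hki : 0 ≤ kcost (C ∩ R) μt := Finset.sum_nonneg fun x _ => by positivity
  have hkc : 0 ≤ kcost C μ := Finset.sum_nonneg fun x _ => by positivity
  have hn : ((C ∩ R).card : ℝ) ≤ (C.card : ℝ) := by
    exact_mod_cast Finset.card_le_card (Finset.inter_subset_left)
  have hn0 : (0:ℝ) ≤ ((C ∩ R).card : ℝ) := Nat.cast_nonneg _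
  have hnC0 : (0:ℝ) ≤ (C.card : ℝ) := Nat.cast_nonneg _
  have hσinv : 1 / (2 * σt2) ≤ 1 / (2 * σ2) := by
    apply one_div_le_one_div_of_le <;> linarith
  have hlw : Real.log w ≤ 0 := Real.log_nonpos hwpos.le hw1
  have hlwt : Real.log wt ≤ 0 := Real.log_nonpos hwt0.le hwt1
  have hlww : Real.log w ≤ Real.log wt := Real.log_le_log hwpos hwle
  have t1 : ((C ∩ R).card : ℝ) * d / 2 * Real.log (2 * π * σt2)
      ≤ ((C.card : ℝ) * d / 2) * ((1 + ε) * Real.log (2 * π * σ2)) := by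
    apply mul_le_mul (by gcongr) hσt2log hL2 (by positivity)
  have t2 : (1 / (2 * σt2)) * kcost (C ∩ R) μt
      ≤ (1 / (2 * σ2)) * ((1 + ε) * kcost C μ) := by
    apply mul_le_mul hσinv hcost hki (by positivity)
  have t3a : (C.card : ℝ) * Real.log w ≤ (C.card : ℝ) * Real.log wt :=
    mul_le_mul_of_nonneg_left hlww hnC0
  have t3b : (C.card : ℝ) * Real.log wt ≤ ((C ∩ R).card : ℝ) * Real.log wt :=
    mul_le_mul_of_nonpos_right hn hlwt
  have hA : 0 ≤ ((C.card : ℝ) * d / 2) * Real.log (2 * π * σ2) := by positivity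
  have hB : 0 ≤ (1 / (2 * σ2)) * kcost C μ := by positivity
  have hW : 0 ≤ -((C.card : ℝ) * Real.log w) := by nlinarith
  unfold wnll
  nlinarith [mul_nonneg hε hA, mul_nonneg hε hB, mul_nonneg hε hW]
end
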